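/- arXiv:1410.4191 — 2 statements merged into one kernel-verified Lean document; each statement's English description precedes it below -/
import Mathlib

section
/- Let G be a graph, B an efficient zero forcing set of G, and F an efficient set of forces of B. Then Term(F) is also an efficient zero forcing set of G, with efficient set of forces Rev(F). -/
open SimpleGraph

variable {V : Type*}

/-- One simultaneous round of the color change rule: all currently forceable
vertices become black. -/
def forceStep (G : SimpleGraph V) (S : Set V) : Set V :=
  S ∪ {w | ∃ v ∈ S, G.Adj v w ∧ ∀ u, G.Adj v u → u ∉ S → u = w}

/-- The (cumulative) set of black vertices after `t` simultaneous rounds,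
starting from `B`; so `B^{(t)} = propSet G B t \ propSet G B (t-1)`. -/
def propSet (G : SimpleGraph V) (B : Set V) : ℕ → Set V
  | 0 => B
  | t + 1 => forceStep G (propSet G B t)

/-- `B` is a zero forcing set of `G`. -/
def IsZFSet (G : SimpleGraph V) (B : Set V) : Prop := ∃ t, propSet G B t = Set.univ

/-- The zero forcing number `Z(G)`. -/
noncomputable def zfNum (G : SimpleGraph V) : ℕ :=
  sInf {n | ∃ B : Set V, IsZFSet G B ∧ B.ncard = n}

/-- `B` is a minimum zero forcing set of `G`. -/
def IsMinZFSet (G : SimpleGraph V) (B : Set V) : Prop := IsZFSet G B ∧ B.ncard = zfNum G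

/-- The propagation time `pt(G,B)` of a zero forcing set `B`. -/
noncomputable def ptSet (G : SimpleGraph V) (B : Set V) : ℕ :=
  sInf {t | propSet G B t = Set.univ}

/-- The minimum propagation time `pt(G)`. -/
noncomputable def ptMin (G : SimpleGraph V) : ℕ :=
  sInf (ptSet G '' {B | IsMinZFSet G B})

/-- The maximum propagation time `PT(G)`. -/
noncomputable def ptMax (G : SimpleGraph V) : ℕ :=
  sSup (ptSet G '' {B | IsMinZFSet G B})

/-- `IsChronList G S L` : starting from black set `S`, the list `L` is a valid
chronological list of forces, performed one at a time, ending with all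
vertices black. -/
def IsChronList (G : SimpleGraph V) : Set V → List (V × V) → Prop
  | S, [] => S = Set.univ
  | S, (v, w) :: L =>
      v ∈ S ∧ w ∉ S ∧ G.Adj v w ∧ (∀ u, G.Adj v u → u ∉ S → u = w) ∧
        IsChronList G (insert w S) L

/-- `F` is a set of forces of `B`: the unordered set of forces of some
chronological list of forces of `B`. -/
def IsForceSet (G : SimpleGraph V) (B : Set V) (F : Set (V × V)) : Prop :=
  ∃ L : List (V × V), IsChronList G B L ∧ {p | p ∈ L} = F

/-- The terminus of a set of forces: the vertices performing no force. -/
def termSet (F : Set (V × V)) : Set V := {v | ∀ w, (v, w) ∉ F}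

/-- The reverse set of forces. -/
def revSet (F : Set (V × V)) : Set (V × V) := (fun p : V × V => (p.2, p.1)) '' F

/-- The (cumulative) set of black vertices after `t` rounds when propagating
using only the forces in `F`, starting from `B`;
so `F^{(t)} = fpropSet G B F t \ fpropSet G B F (t-1)`. -/
def fpropSet (G : SimpleGraph V) (B : Set V) (F : Set (V × V)) : ℕ → Set V
  | 0 => B
  | t + 1 => fpropSet G B F t ∪
      {w | ∃ v, (v, w) ∈ F ∧ v ∈ fpropSet G B F t ∧ w ∉ fpropSet G B F t ∧
        ∀ u, G.Adj v u → u ∉ fpropSet G B F t → u = w}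

/-- The propagation time `pt(G,F)` of a set of forces `F` of `B`. -/
noncomputable def ptForces (G : SimpleGraph V) (B : Set V) (F : Set (V × V)) : ℕ :=
  sInf {t | fpropSet G B F t = Set.univ}

/-- `B` is an efficient zero forcing set of `G`. -/
def IsEffZFSet (G : SimpleGraph V) (B : Set V) : Prop :=
  IsMinZFSet G B ∧ ptSet G B = ptMin G

/-- `F` is an efficient set of forces of the minimum zero forcing set `B`. -/
def IsEffForces (G : SimpleGraph V) (B : Set V) (F : Set (V × V)) : Prop :=
  IsMinZFSet G B ∧ IsForceSet G B F ∧ ptForces G B F = ptMin G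

/-!
Along a chronological list of forces of `B`, the set `B` is the complement of the forced
vertices and `Term(F)` the complement of the forcing vertices; both sets of vertices are in
bijection with `F`, so `|Term(F)| = |B|`. Reversing the list gives a chronological list of the
forces `Rev(F)` from `Term(F)`, so `Term(F)` is a minimum zero forcing set. Performed
simultaneously, the reversed forces undo the forward rounds in the opposite order, whence
`pt(G) ≤ pt(G, Term(F)) ≤ pt(G, Rev(F)) ≤ pt(G, F) = pt(G)`.
-/

open Set

section FPropSet

variable {G : SimpleGraph V} {B : Set V} {F : Set (V × V)}

theorem fpropSet_subset_succ (t : ℕ) : fpropSet G B F t ⊆ fpropSet G B F (t + 1) :=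
  subset_union_left

theorem fpropSet_mono : Monotone (fpropSet G B F) :=
  monotone_nat_of_le_succ fpropSet_subset_succ

theorem fpropSet_subset_propSet (hadj : ∀ p ∈ F, G.Adj p.1 p.2) (t : ℕ) :
    fpropSet G B F t ⊆ propSet G B t := by
  induction t with
  | zero => exact subset_rfl
  | succ t ih =>
    rintro w (hw | ⟨v, hvw, hv, -, hforce⟩)
    · exact subset_union_left (ih hw)
    · exact Or.inr ⟨v, ih hv, hadj _ hvw, fun u hvu hu => hforce u hvu fun h => hu (ih h)⟩

theorem ptSet_le_ptForces (hadj : ∀ p ∈ F, G.Adj p.1 p.2)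
    (h : ∃ t, fpropSet G B F t = univ) : ptSet G B ≤ ptForces G B F :=
  Nat.sInf_le <| eq_univ_of_univ_subset <|
    (Nat.sInf_mem h).symm.subset.trans (fpropSet_subset_propSet hadj _)

theorem fst_forces_of_snd_mem_fpropSet_succ (hinj : InjOn Prod.snd F)
    (hB : ∀ p ∈ F, p.2 ∉ B) {u z : V} (huz : (u, z) ∈ F) {m : ℕ}
    (hz : z ∈ fpropSet G B F (m + 1)) :
    u ∈ fpropSet G B F m ∧ ∀ x, G.Adj u x → x ∉ fpropSet G B F m → x = z := by
  induction m with
  | zero =>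
    rcases hz with hz | ⟨u', hu'z, hu', -, hforce⟩
    · exact absurd hz (hB _ huz)
    · obtain rfl : u' = u := congrArg Prod.fst (hinj hu'z huz rfl)
      exact ⟨hu', hforce⟩
  | succ m ih =>
    rcases hz with hz | ⟨u', hu'z, hu', -, hforce⟩
    · obtain ⟨hu, hforce⟩ := ih hz
      exact ⟨fpropSet_subset_succ m hu,
        fun x hux hx => hforce x hux fun h => hx (fpropSet_subset_succ m h)⟩
    · obtain rfl : u' = u := congrArg Prod.fst (hinj hu'z huz rfl)
      exact ⟨hu', hforce⟩

end FPropSet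

theorem mem_termSet_or_exists (F : Set (V × V)) (v : V) : v ∈ termSet F ∨ ∃ w, (v, w) ∈ F := by
  by_contra! h
  exact h.1 fun w hw => h.2 w hw

theorem termSet_eq_compl_image_fst (F : Set (V × V)) : termSet F = (Prod.fst '' F)ᶜ := by
  ext v
  simp [termSet]

theorem termSet_insert (F : Set (V × V)) (v w : V) :
    termSet (insert (v, w) F) = termSet F \ {v} := by
  rw [termSet_eq_compl_image_fst, termSet_eq_compl_image_fst, image_insert_eq, insert_eq,
    compl_union, sdiff_eq, inter_comm]

namespace IsChronList

variable {G : SimpleGraph V} {S : Set V} {L : List (V × V)}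

theorem adj (h : IsChronList G S L) {p : V × V} (hp : p ∈ L) : G.Adj p.1 p.2 := by
  induction L generalizing S with
  | nil => cases hp
  | cons q L ih =>
    obtain ⟨-, -, hq, -, hL⟩ := h
    rcases List.mem_cons.mp hp with rfl | hp
    · exact hq
    · exact ih hL hp

theorem snd_notMem (h : IsChronList G S L) {p : V × V} (hp : p ∈ L) : p.2 ∉ S := by
  induction L generalizing S with
  | nil => cases hp
  | cons q L ih =>
    obtain ⟨-, hq, -, -, hL⟩ := h
    rcases List.mem_cons.mp hp with rfl | hp
    · exact hq
    · exact fun hpS => ih hL hp (mem_insert_of_mem _ hpS)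

theorem head_fst_notMem_tail {v w : V} (h : IsChronList G S ((v, w) :: L)) (z : V) :
    (v, z) ∉ L := by
  obtain ⟨-, -, -, hforce, hL⟩ := h
  intro hz
  have hzS := hL.snd_notMem hz
  obtain rfl : z = w := hforce z (hL.adj hz) fun h => hzS (mem_insert_of_mem _ h)
  exact hzS (mem_insert z S)

theorem injOn_fst (h : IsChronList G S L) : InjOn Prod.fst {p | p ∈ L} := by
  induction L generalizing S with
  | nil => intro p hp; cases hp
  | cons q L ih =>
    obtain ⟨v, w⟩ := q
    have hv := h.head_fst_notMem_tail
    obtain ⟨-, -, -, -, hL⟩ := h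
    rintro ⟨a, b⟩ hp ⟨a', b'⟩ hp' (rfl : a = a')
    rcases List.mem_cons.mp hp with hp | hp <;> rcases List.mem_cons.mp hp' with hp' | hp'
    · rw [hp, hp']
    · cases hp
      exact absurd hp' (hv b')
    · cases hp'
      exact absurd hp (hv b)
    · exact ih hL hp hp' rfl

theorem injOn_snd (h : IsChronList G S L) : InjOn Prod.snd {p | p ∈ L} := by
  induction L generalizing S with
  | nil => intro p hp; cases hp
  | cons q L ih =>
    obtain ⟨-, -, -, -, hL⟩ := h
    have hq : ∀ p ∈ L, p.2 ≠ q.2 := fun p hp hpq => hL.snd_notMem hp (hpq ▸ mem_insert _ S)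
    intro p hp p' hp' hpp'
    rcases List.mem_cons.mp hp with rfl | hpL <;> rcases List.mem_cons.mp hp' with rfl | hpL'
    · rfl
    · exact absurd hpp'.symm (hq p' hpL')
    · exact absurd hpp' (hq p hpL)
    · exact ih hL hpL hpL' hpp'

theorem compl_eq_image_snd (h : IsChronList G S L) : Sᶜ = Prod.snd '' {p | p ∈ L} := by
  refine Subset.antisymm ?_ (image_subset_iff.mpr fun p hp => h.snd_notMem hp)
  induction L generalizing S with
  | nil => simp [show S = univ from h]
  | cons q L ih =>
    obtain ⟨-, -, -, -, hL⟩ := h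
    intro x hx
    by_cases hxq : x = q.2
    · exact ⟨q, List.mem_cons_self, hxq.symm⟩
    · obtain ⟨p, hp, rfl⟩ := ih hL fun h => (mem_insert_iff.mp h).elim hxq hx
      exact ⟨p, List.mem_cons_of_mem _ hp, rfl⟩

theorem fpropSet_add_length_eq_univ {B : Set V} {F : Set (V × V)} (h : IsChronList G S L)
    (hLF : ∀ p ∈ L, p ∈ F) {t : ℕ} (hS : S ⊆ fpropSet G B F t) :
    fpropSet G B F (t + L.length) = univ := by
  induction L generalizing S t with
  | nil => exact eq_univ_of_univ_subset ((show S = univ from h) ▸ hS)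
  | cons q L ih =>
    obtain ⟨v, w⟩ := q
    obtain ⟨hv, -, -, hforce, hL⟩ := h
    rw [List.length_cons, add_comm L.length, ← add_assoc]
    refine ih hL (fun p hp => hLF p (List.mem_cons_of_mem _ hp)) (insert_subset ?_ ?_)
    · by_cases hw : w ∈ fpropSet G B F t
      · exact fpropSet_subset_succ t hw
      · exact Or.inr ⟨v, hLF _ List.mem_cons_self, hS hv, hw,
          fun u hvu hu => hforce u hvu fun h => hu (hS h)⟩
    · exact hS.trans (fpropSet_subset_succ t)

theorem sdiff_singleton_append {v w : V} (hwv : G.Adj w v) {M : List (V × V)}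
    (hM : IsChronList G S M) (hv : ∀ p ∈ M, p.1 ≠ v ∧ ¬G.Adj p.1 v ∧ p.2 ≠ v) :
    IsChronList G (S \ {v}) (M ++ [(w, v)]) := by
  induction M generalizing S with
  | nil =>
    obtain rfl : S = univ := hM
    refine ⟨⟨mem_univ w, hwv.ne⟩, fun h => h.2 rfl, hwv, fun u _ hu => ?_, ?_⟩
    · by_contra huv
      exact hu ⟨mem_univ u, huv⟩
    · show insert v (univ \ {v}) = univ
      simp
  | cons p M ih =>
    obtain ⟨a, b⟩ := p
    obtain ⟨ha, hb, hab, hforce, hM⟩ := hM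
    obtain ⟨hav, hnadj, hbv⟩ := hv _ List.mem_cons_self
    refine ⟨⟨ha, hav⟩, fun h => hb h.1, hab,
      fun u hau hu => hforce u hau fun huS => hu ⟨huS, fun huv => hnadj (huv ▸ hau)⟩, ?_⟩
    rw [insert_sdiff_singleton_comm hbv]
    exact ih hM fun p hp => hv p (List.mem_cons_of_mem _ hp)

theorem reverse_map_swap (h : IsChronList G S L) :
    IsChronList G (termSet {p | p ∈ L}) (L.reverse.map Prod.swap) := by
  induction L generalizing S with
  | nil => exact eq_univ_of_forall fun x z hz => by cases hz
  | cons q L ih =>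
    obtain ⟨v, w⟩ := q
    have hv := h.head_fst_notMem_tail
    obtain ⟨hvS, -, hvw, hforce, hL⟩ := h
    have hterm : termSet {p | p ∈ (v, w) :: L} = termSet {p | p ∈ L} \ {v} := by
      rw [← termSet_insert]
      congr with p
      exact List.mem_cons
    rw [hterm, List.reverse_cons, List.map_append]
    refine (ih hL).sdiff_singleton_append hvw.symm fun p hp => ?_
    obtain ⟨⟨x, y⟩, hxy, rfl⟩ := List.mem_map.mp hp
    have hy : y ∉ insert w S := hL.snd_notMem (List.mem_reverse.mp hxy)
    refine ⟨fun (hyv : y = v) => hy (hyv ▸ mem_insert_of_mem _ hvS), fun hyv => ?_,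
      fun (hxv : x = v) => hv y (hxv ▸ List.mem_reverse.mp hxy)⟩
    obtain rfl : y = w := hforce y hyv.symm fun h => hy (mem_insert_of_mem _ h)
    exact hy (mem_insert y S)

end IsChronList

section Reversal

variable {G : SimpleGraph V} {B : Set V} {F : Set (V × V)}

/-- Reverse round `t` undoes forward round `T - t + 1`. -/
theorem mem_fpropSet_revSet (hinj : InjOn Prod.snd F) (hB : ∀ p ∈ F, p.2 ∉ B) {T : ℕ}
    (hT : fpropSet G B F T = univ) {t m : ℕ} (htm : t + m = T) {v : V}
    (hv : v ∈ termSet F ∨ ∃ x, (v, x) ∈ F ∧ x ∉ fpropSet G B F m) :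
    v ∈ fpropSet G (termSet F) (revSet F) t := by
  induction t generalizing m v with
  | zero =>
    rcases hv with hv | ⟨x, -, hx⟩
    · exact hv
    · rw [zero_add] at htm
      exact absurd (htm ▸ hT ▸ mem_univ x) hx
  | succ t ih =>
    have ih' : ∀ u, (u ∈ termSet F ∨ ∃ z, (u, z) ∈ F ∧ z ∉ fpropSet G B F (m + 1)) →
        u ∈ fpropSet G (termSet F) (revSet F) t := fun u => ih (by omega)
    rcases hv with hv | ⟨x, hvx, hx⟩
    · exact fpropSet_mono (Nat.zero_le _) hv
    by_cases hvR : v ∈ fpropSet G (termSet F) (revSet F) t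
    · exact fpropSet_subset_succ t hvR
    refine Or.inr ⟨x, ⟨(v, x), hvx, rfl⟩, ih' x ?_, hvR, fun u hxu huR => ?_⟩
    · refine (mem_termSet_or_exists F x).imp_right fun ⟨y, hxy⟩ => ⟨y, hxy, fun hy => hx ?_⟩
      exact (fst_forces_of_snd_mem_fpropSet_succ hinj hB hxy hy).1
    · by_contra huv
      refine huR (ih' u <| (mem_termSet_or_exists F u).imp_right fun ⟨z, huz⟩ =>
        ⟨z, huz, fun hz => huv ?_⟩)
      obtain rfl := (fst_forces_of_snd_mem_fpropSet_succ hinj hB huz hz).2 x hxu.symm hx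
      exact congrArg Prod.fst (hinj huz hvx rfl)

theorem ptForces_revSet_le (hinj : InjOn Prod.snd F) (hB : ∀ p ∈ F, p.2 ∉ B)
    (h : ∃ t, fpropSet G B F t = univ) :
    ptForces G (termSet F) (revSet F) ≤ ptForces G B F :=
  Nat.sInf_le <| eq_univ_of_forall fun v =>
    mem_fpropSet_revSet hinj hB (Nat.sInf_mem h) (add_zero _) <|
      (mem_termSet_or_exists F v).imp_right fun ⟨x, hvx⟩ => ⟨x, hvx, hB _ hvx⟩

end Reversal

theorem ncard_compl_eq_of_ncard_eq {α : Type*} {s t : Set α} (hs : s.Finite) (ht : t.Finite)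
    (h : s.ncard = t.ncard) : sᶜ.ncard = tᶜ.ncard := by
  rw [compl_eq_univ_sdiff, compl_eq_univ_sdiff, ncard_sdiff (subset_univ s) hs,
    ncard_sdiff (subset_univ t) ht, h]

namespace IsForceSet

variable {G : SimpleGraph V} {B : Set V} {F : Set (V × V)}

theorem finite (h : IsForceSet G B F) : F.Finite := by
  obtain ⟨L, -, rfl⟩ := h
  exact L.finite_toSet

theorem adj (h : IsForceSet G B F) : ∀ p ∈ F, G.Adj p.1 p.2 := by
  obtain ⟨L, hL, rfl⟩ := h
  exact fun _ => hL.adj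

theorem snd_notMem (h : IsForceSet G B F) : ∀ p ∈ F, p.2 ∉ B := by
  obtain ⟨L, hL, rfl⟩ := h
  exact fun _ => hL.snd_notMem

theorem injOn_fst (h : IsForceSet G B F) : InjOn Prod.fst F := by
  obtain ⟨L, hL, rfl⟩ := h
  exact hL.injOn_fst

theorem injOn_snd (h : IsForceSet G B F) : InjOn Prod.snd F := by
  obtain ⟨L, hL, rfl⟩ := h
  exact hL.injOn_snd

theorem compl_eq_image_snd (h : IsForceSet G B F) : Bᶜ = Prod.snd '' F := by
  obtain ⟨L, hL, rfl⟩ := h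
  exact hL.compl_eq_image_snd

theorem exists_fpropSet_eq_univ (h : IsForceSet G B F) : ∃ t, fpropSet G B F t = univ := by
  obtain ⟨L, hL, rfl⟩ := h
  exact ⟨0 + L.length, hL.fpropSet_add_length_eq_univ (fun _ => id) subset_rfl⟩

theorem isZFSet (h : IsForceSet G B F) : IsZFSet G B := by
  obtain ⟨t, ht⟩ := h.exists_fpropSet_eq_univ
  exact ⟨t, eq_univ_of_univ_subset (ht ▸ fpropSet_subset_propSet h.adj t)⟩

theorem ncard_termSet (h : IsForceSet G B F) : (termSet F).ncard = B.ncard := by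
  rw [termSet_eq_compl_image_fst, ← compl_compl B, h.compl_eq_image_snd]
  exact ncard_compl_eq_of_ncard_eq (h.finite.image _) (h.finite.image _)
    (h.injOn_fst.ncard_image.trans h.injOn_snd.ncard_image.symm)

theorem termSet_revSet (h : IsForceSet G B F) : IsForceSet G (termSet F) (revSet F) := by
  obtain ⟨L, hL, rfl⟩ := h
  refine ⟨_, hL.reverse_map_swap, ?_⟩
  ext p
  simp [revSet]

end IsForceSet

theorem term_eff_rev_eff_general {V : Type*} (G : SimpleGraph V) (B : Set V)
    (F : Set (V × V)) (hF : IsEffForces G B F) :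
    IsEffZFSet G (termSet F) ∧ IsEffForces G (termSet F) (revSet F) := by
  obtain ⟨hBmin, hFB, hFpt⟩ := hF
  have hrev := hFB.termSet_revSet
  have hmin : IsMinZFSet G (termSet F) := ⟨hrev.isZFSet, hFB.ncard_termSet.trans hBmin.2⟩
  have hpt_le : ptSet G (termSet F) ≤ ptForces G (termSet F) (revSet F) :=
    ptSet_le_ptForces hrev.adj hrev.exists_fpropSet_eq_univ
  have hrev_le : ptForces G (termSet F) (revSet F) ≤ ptMin G :=
    hFpt ▸ ptForces_revSet_le hFB.injOn_snd hFB.snd_notMem hFB.exists_fpropSet_eq_univ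
  have hmin_le : ptMin G ≤ ptSet G (termSet F) := Nat.sInf_le ⟨_, hmin, rfl⟩
  exact ⟨⟨hmin, by omega⟩, hmin, hrev, by omega⟩

/-- If `B` is an efficient zero forcing set of `G` and `F` an efficient set of
forces of `B`, then `Term(F)` is an efficient zero forcing set of `G` with
efficient set of forces `Rev(F)`. -/
theorem term_eff_rev_eff {V : Type*} [Finite V] (G : SimpleGraph V) (B : Set V)
    (F : Set (V × V)) (hB : IsEffZFSet G B) (hF : IsEffForces G B F) :
    IsEffZFSet G (termSet F) ∧ IsEffForces G (termSet F) (revSet F) :=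
  term_eff_rev_eff_general G B F hF
end

section
/- Let G be a graph. Any two of the following conditions imply the third: (1) |G| = 2·Z(G); (2) pt(G) = 1; (3) G is a matching graph, i.e., G is the disjoint union of two graphs H₁, H₂ of equal order together with a perfect matching between V(H₁) and V(H₂) given by a bijection μ. -/
open SimpleGraph

variable {V : Type*}

/-- `G` is a matching graph: its vertex set can be partitioned into `A` and
`Aᶜ` with a bijection `μ : A → Aᶜ` such that the edges between `A` and `Aᶜ`
are exactly the matching edges `{a, μ a}`. -/
def IsMatchingGraph (G : SimpleGraph V) : Prop :=
  ∃ (A : Set V) (μ : V → V), Set.BijOn μ A Aᶜ ∧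
    ∀ a ∈ A, ∀ b ∈ Aᶜ, (G.Adj a b ↔ μ a = b)

section Aux

variable [Finite V] [Nonempty V]

lemma zf_univ (G : SimpleGraph V) : IsZFSet G (Set.univ : Set V) := ⟨0, rfl⟩

lemma exists_minZF (G : SimpleGraph V) : ∃ B : Set V, IsMinZFSet G B := by
  have hne : {n | ∃ B : Set V, IsZFSet G B ∧ B.ncard = n}.Nonempty :=
    ⟨(Set.univ : Set V).ncard, Set.univ, zf_univ G, rfl⟩
  obtain ⟨B, hB, hc⟩ := Nat.sInf_mem hne
  exact ⟨B, hB, hc⟩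

lemma propSet_empty (G : SimpleGraph V) (t : ℕ) : propSet G (∅ : Set V) t = ∅ := by
  induction t with
  | zero => rfl
  | succ t ih => simp [propSet, forceStep, ih]

lemma one_le_zfNum (G : SimpleGraph V) : 1 ≤ zfNum G := by
  obtain ⟨B, hB, hc⟩ := exists_minZF G
  rw [← hc]
  rw [Nat.one_le_iff_ne_zero]
  intro h
  have hB0 : B = ∅ := by
    have := (Set.ncard_eq_zero (Set.toFinite B)).mp h
    exact this
  obtain ⟨t, ht⟩ := hB
  rw [hB0, propSet_empty] at ht
  exact (Set.univ_nonempty).ne_empty ht.symm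

lemma ncard_compl_add (B : Set V) : B.ncard + Bᶜ.ncard = Nat.card V := by
  have := Set.ncard_add_ncard_compl B
  simpa using this

lemma forcer_exists {G : SimpleGraph V} {B : Set V} (h1 : forceStep G B = Set.univ)
    {w : V} (hw : w ∉ B) :
    ∃ v ∈ B, G.Adj v w ∧ ∀ u, G.Adj v u → u ∉ B → u = w := by
  have hm : w ∈ forceStep G B := h1 ▸ Set.mem_univ w
  rcases hm with h | h
  · exact absurd h hw
  · exact h

lemma exists_forcer_map {G : SimpleGraph V} {B : Set V} (h1 : forceStep G B = Set.univ) :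
    ∃ g : V → V, (∀ w ∈ Bᶜ, g w ∈ B ∧ G.Adj (g w) w ∧
      ∀ u, G.Adj (g w) u → u ∉ B → u = w) ∧ Set.InjOn g Bᶜ := by
  classical
  choose g hg1 hg2 hg3 using fun (w : V) (hw : w ∉ B) => forcer_exists h1 hw
  refine ⟨fun w => if h : w ∈ B then w else g w h, ?_, ?_⟩
  · intro w hw
    simp only [Set.mem_compl_iff] at hw
    simp only [dif_neg hw]
    exact ⟨hg1 w hw, hg2 w hw, hg3 w hw⟩
  · intro w1 hw1 w2 hw2 heq
    simp only [Set.mem_compl_iff] at hw1 hw2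
    simp only [dif_neg hw1, dif_neg hw2] at heq
    exact hg3 w2 hw2 w1 (heq ▸ hg2 w1 hw1) hw1

/-- From a pt-1 zero forcing set we get `|Bᶜ| ≤ |B|`. -/
lemma compl_ncard_le {G : SimpleGraph V} {B : Set V} (h1 : forceStep G B = Set.univ) :
    Bᶜ.ncard ≤ B.ncard := by
  obtain ⟨g, hg, hinj⟩ := exists_forcer_map h1
  exact Set.ncard_le_ncard_of_injOn g (fun w hw => (hg w hw).1) hinj (Set.toFinite B)

/-- A matching graph structure forces everything from `A` in one step. -/
lemma matching_forceStep {G : SimpleGraph V} {A : Set V} {μ : V → V}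
    (hbij : Set.BijOn μ A Aᶜ) (hedge : ∀ a ∈ A, ∀ b ∈ Aᶜ, (G.Adj a b ↔ μ a = b)) :
    forceStep G A = Set.univ := by
  apply Set.eq_univ_of_forall
  intro w
  by_cases hw : w ∈ A
  · exact Or.inl hw
  · obtain ⟨a, ha, hμa⟩ := hbij.surjOn hw
    refine Or.inr ⟨a, ha, (hedge a ha w hw).mpr hμa, ?_⟩
    intro u hu hunA
    have := (hedge a ha u hunA).mp hu
    rw [← this, hμa]

lemma matching_ncard {A : Set V} {μ : V → V} (hbij : Set.BijOn μ A Aᶜ) :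
    Aᶜ.ncard = A.ncard := by
  rw [← hbij.image_eq]
  exact Set.ncard_image_of_injOn hbij.injOn

/-- Extract from `ptMin G = 1` a minimum ZF set with propagation in one step. -/
lemma exists_pt_one {G : SimpleGraph V} (hpt : ptMin G = 1) :
    ∃ B : Set V, IsMinZFSet G B ∧ forceStep G B = Set.univ ∧ B ≠ Set.univ := by
  have hne : (ptSet G '' {B : Set V | IsMinZFSet G B}).Nonempty := by
    obtain ⟨B, hB⟩ := exists_minZF G
    exact ⟨ptSet G B, B, hB, rfl⟩
  have hmem := Nat.sInf_mem hne
  rw [show sInf (ptSet G '' {B : Set V | IsMinZFSet G B}) = ptMin G from rfl, hpt] at hmem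
  obtain ⟨B, hBmin, hBpt⟩ := hmem
  have hSne : {t | propSet G B t = Set.univ}.Nonempty := hBmin.1
  have h1mem : propSet G B 1 = Set.univ := by
    have := Nat.sInf_mem hSne
    rwa [show sInf {t | propSet G B t = Set.univ} = ptSet G B from rfl, hBpt] at this
  refine ⟨B, hBmin, h1mem, ?_⟩
  intro h0
  have : ptSet G B ≤ 0 := Nat.sInf_le (by exact h0)
  omega

end Aux

/-- Any two of the following imply the third: `|G| = 2·Z(G)`; `pt(G) = 1`;
`G` is a matching graph. -/

theorem matching_two_imply_third {V : Type*} [Finite V] [Nonempty V]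
    (G : SimpleGraph V) :
    ((Nat.card V = 2 * zfNum G ∧ ptMin G = 1) → IsMatchingGraph G) ∧
    ((Nat.card V = 2 * zfNum G ∧ IsMatchingGraph G) → ptMin G = 1) ∧
    ((ptMin G = 1 ∧ IsMatchingGraph G) → Nat.card V = 2 * zfNum G) := by
  constructor
  · rintro ⟨hcard, hpt⟩
    obtain ⟨B, hBmin, hstep, hBne⟩ := exists_pt_one hpt
    obtain ⟨g, hg, hinj⟩ := exists_forcer_map hstep
    have hZ : B.ncard = zfNum G := hBmin.2
    have hsum := ncard_compl_add B
    have hcc : Bᶜ.ncard = B.ncard := by omega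
    have hmaps : ∀ w ∈ Bᶜ, g w ∈ B := fun w hw => (hg w hw).1
    have himg : g '' Bᶜ = B := by
      apply Set.eq_of_subset_of_ncard_le (Set.image_subset_iff.mpr hmaps)
      rw [Set.ncard_image_of_injOn hinj, hcc]
    have hbij : Set.BijOn g Bᶜ B := ⟨hmaps, hinj, by rw [Set.SurjOn, himg]⟩
    set μ := Function.invFunOn g Bᶜ with hμdef
    have hinv : Set.InvOn μ g Bᶜ B := hbij.invOn_invFunOn
    have hμbij : Set.BijOn μ B Bᶜ := hbij.symm hinv.symm
    refine ⟨B, μ, hμbij, ?_⟩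
    intro a ha b hb
    constructor
    · intro hadj
      have hw : μ a ∈ Bᶜ := hμbij.mapsTo ha
      have hga : g (μ a) = a := hinv.2 ha
      have hadj' : G.Adj (g (μ a)) b := by rw [hga]; exact hadj
      exact ((hg (μ a) hw).2.2 b hadj' hb).symm
    · intro hμab
      have hgb : g b = a := by rw [← hμab]; exact hinv.2 ha
      have := (hg b hb).2.1
      rwa [hgb] at this
  constructor
  · rintro ⟨hcard, A, μ, hbij, hedge⟩
    have hstep := matching_forceStep hbij hedge
    have hAcc := matching_ncard hbij
    have hsum := ncard_compl_add A
    have hZ1 := one_le_zfNum G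
    have hAzf : IsZFSet G A := ⟨1, hstep⟩
    have hle : zfNum G ≤ A.ncard := Nat.sInf_le ⟨A, hAzf, rfl⟩
    have hAne : A ≠ Set.univ := by
      intro h
      rw [h] at hAcc hsum
      simp [Set.ncard_univ] at hAcc hsum
      omega
    have hAmin : IsMinZFSet G A := ⟨hAzf, by omega⟩
    have hSne : {t | propSet G A t = Set.univ}.Nonempty := ⟨1, hstep⟩
    have hptA : ptSet G A = 1 := by
      have hle1 : ptSet G A ≤ 1 := Nat.sInf_le hstep
      have hne0 : ptSet G A ≠ 0 := by
        intro h0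
        have := Nat.sInf_mem hSne
        rw [show sInf {t | propSet G A t = Set.univ} = ptSet G A from rfl, h0] at this
        exact hAne this
      omega
    have hmemim : (1 : ℕ) ∈ ptSet G '' {B : Set V | IsMinZFSet G B} := ⟨A, hAmin, hptA⟩
    have hle1 : ptMin G ≤ 1 := Nat.sInf_le hmemim
    have hne0 : ptMin G ≠ 0 := by
      intro h0
      have hne : (ptSet G '' {B : Set V | IsMinZFSet G B}).Nonempty := ⟨1, hmemim⟩
      have := Nat.sInf_mem hne
      rw [show sInf (ptSet G '' {B : Set V | IsMinZFSet G B}) = ptMin G from rfl, h0] at this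
      obtain ⟨B, hBmin, hB0⟩ := this
      have hSBne : {t | propSet G B t = Set.univ}.Nonempty := hBmin.1
      have hBuniv : propSet G B 0 = Set.univ := by
        have := Nat.sInf_mem hSBne
        rwa [show sInf {t | propSet G B t = Set.univ} = ptSet G B from rfl, hB0] at this
      have hb1 : B.ncard = Nat.card V := by
        rw [show B = Set.univ from hBuniv]; exact Set.ncard_univ V
      have hb2 := hBmin.2
      omega
    omega
  · rintro ⟨hpt, A, μ, hbij, hedge⟩
    have hstep := matching_forceStep hbij hedge
    have hAcc := matching_ncard hbij
    have hsumA := ncard_compl_add A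
    have hle : zfNum G ≤ A.ncard := Nat.sInf_le ⟨A, ⟨1, hstep⟩, rfl⟩
    obtain ⟨B, hBmin, hstepB, _⟩ := exists_pt_one hpt
    have hcle := compl_ncard_le hstepB
    have hsumB := ncard_compl_add B
    have hZ := hBmin.2
    omega
end
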